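/- arXiv:2506.15616 — 3 statements merged into one kernel-verified Lean document; each statement's English description precedes it below -/
import Mathlib

section
/- Let G be a locally compact Hausdorff group and let L, H be closed subgroups. Then the action of L on the homogeneous space G/H (by left translation) is proper if and only if for every compact subset S ⊆ G the set L ∩ SHS is relatively compact, where SHS = {a x b : a, b ∈ S, x ∈ H}. -/
/-!
For `S ⊆ G` the elements of `G` moving some point of `π S ⊆ G/H` back into `π S` are exactly
`S H S⁻¹`. So properness applied to `K = π (S ∪ S⁻¹)` bounds `L ∩ SHS`. Conversely, since `π` is
open and `G` locally compact, every compact `K ⊆ G/H` lies in some `π S` with `S` compact, so the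
elements of `L` moving a point of `K` into `K` form a closed subset of the compact closure of
`L ∩ S'HS'`, where `S' = S ∪ S⁻¹`.
-/

open Set Pointwise

theorem IsOpenMap.exists_isCompact_image_superset {X Y : Type*} [TopologicalSpace X]
    [TopologicalSpace Y] [WeaklyLocallyCompactSpace X] {f : X → Y} (hf : IsOpenMap f)
    (hsurj : Function.Surjective f) {K : Set Y} (hK : IsCompact K) :
    ∃ S : Set X, IsCompact S ∧ K ⊆ f '' S := by
  choose C hC hCx using fun x : X => exists_compact_mem_nhds x
  obtain ⟨t, ht⟩ := hK.elim_finite_subcover (fun x => f '' interior (C x))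
    (fun x => hf _ isOpen_interior) fun y _ => by
      obtain ⟨x, rfl⟩ := hsurj y
      exact mem_iUnion.2 ⟨x, mem_image_of_mem f (mem_interior_iff_mem_nhds.2 (hCx x))⟩
  refine ⟨⋃ x ∈ t, C x, t.isCompact_biUnion fun x _ => hC x, ht.trans ?_⟩
  simp only [image_iUnion₂]
  exact iUnion₂_mono fun x _ => image_mono interior_subset

theorem isClosed_setOf_exists_mem_smul_mem {G X : Type*} [Group G] [TopologicalSpace G]
    [TopologicalSpace X] [MulAction G X] [ContinuousSMul G X] {U V : Set X}
    (hU : IsCompact U) (hV : IsClosed V) : IsClosed {g : G | ∃ x ∈ U, g • x ∈ V} := by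
  have : CompactSpace U := isCompact_iff_compactSpace.mp hU
  convert isClosedMap_fst_of_compactSpace _
    (hV.preimage (continuous_fst.smul (continuous_subtype_val.comp continuous_snd)) :
      IsClosed {p : G × U | p.1 • (p.2 : X) ∈ V})
  ext g
  simp

theorem QuotientGroup.setOf_exists_smul_mem_image_mk {G : Type*} [Group G] (H : Subgroup G)
    (A B : Set G) :
    {g : G | ∃ q ∈ (QuotientGroup.mk '' B : Set (G ⧸ H)), g • q ∈ QuotientGroup.mk '' A} =
      A * (H : Set G) * B⁻¹ := by
  ext g
  constructor
  · rintro ⟨_, ⟨b, hb, rfl⟩, a, ha, hab⟩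
    have hmem : a⁻¹ * (g * b) ∈ H := QuotientGroup.eq.mp hab
    refine ⟨a * (a⁻¹ * (g * b)), mul_mem_mul ha hmem, b⁻¹, inv_mem_inv.mpr hb, ?_⟩
    group
  · rintro ⟨_, ⟨a, ha, h, hh, rfl⟩, c, hc, rfl⟩
    refine ⟨QuotientGroup.mk c⁻¹, mem_image_of_mem _ hc, a, ha, ?_⟩
    rw [MulAction.Quotient.smul_mk, QuotientGroup.eq]
    simpa [mul_assoc] using hh

theorem proper_on_quotient_iff_inter_SHS_relCompact_general {G : Type*} [Group G] [TopologicalSpace G]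
    [IsTopologicalGroup G] [LocallyCompactSpace G]
    (L H : Subgroup G) (hL : IsClosed (L : Set G)) (hH : IsClosed (H : Set G)) :
    (∀ K : Set (G ⧸ H), IsCompact K →
        IsCompact {ℓ : G | ℓ ∈ L ∧ ∃ q ∈ K, ℓ • q ∈ K}) ↔
    (∀ S : Set G, IsCompact S →
        IsCompact (closure ((L : Set G) ∩ (S * (H : Set G) * S)))) := by
  have hsymm (S : Set G) : (S ∪ S⁻¹)⁻¹ = S ∪ S⁻¹ := by rw [union_inv, inv_inv, union_comm]
  constructor
  · intro hproper S hS
    refine (hproper _ ((hS.union hS.inv).image QuotientGroup.continuous_mk)).closure_of_subset ?_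
    rintro ℓ ⟨hℓL, hℓ⟩
    have hℓ' : ℓ ∈ (S ∪ S⁻¹) * (H : Set G) * (S ∪ S⁻¹)⁻¹ := by
      rw [hsymm]
      exact mul_subset_mul (mul_subset_mul_right subset_union_left) subset_union_left hℓ
    rw [← QuotientGroup.setOf_exists_smul_mem_image_mk] at hℓ'
    exact ⟨hℓL, hℓ'⟩
  · intro hrel K hK
    have : IsClosed (H : Set G) := hH -- makes `G ⧸ H` Hausdorff, so `K` is closed
    obtain ⟨S, hS, hKS⟩ := (QuotientGroup.isOpenMap_coe (N := H)).exists_isCompact_image_superset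
      QuotientGroup.mk_surjective hK
    refine (hrel _ (hS.union hS.inv)).of_isClosed_subset
      (hL.inter (isClosed_setOf_exists_mem_smul_mem hK hK.isClosed)) ?_
    rintro ℓ ⟨hℓL, q, hq, hℓq⟩
    have hℓ : ℓ ∈ (S ∪ S⁻¹) * (H : Set G) * (S ∪ S⁻¹)⁻¹ := by
      rw [← QuotientGroup.setOf_exists_smul_mem_image_mk]
      exact ⟨q, image_mono subset_union_left (hKS hq), image_mono subset_union_left (hKS hℓq)⟩
    rw [hsymm] at hℓ
    exact subset_closure ⟨hℓL, hℓ⟩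

/-- Let `G` be a locally compact Hausdorff group and `L`, `H` closed subgroups. The action
of `L` on `G/H` by left translation is proper if and only if `L ∩ SHS` is relatively
compact for every compact `S ⊆ G`. -/
theorem proper_on_quotient_iff_inter_SHS_relCompact {G : Type*} [Group G] [TopologicalSpace G]
    [IsTopologicalGroup G] [LocallyCompactSpace G] [T2Space G]
    (L H : Subgroup G) (hL : IsClosed (L : Set G)) (hH : IsClosed (H : Set G)) :
    (∀ K : Set (G ⧸ H), IsCompact K →
        IsCompact {ℓ : G | ℓ ∈ L ∧ ∃ q ∈ K, ℓ • q ∈ K}) ↔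
    (∀ S : Set G, IsCompact S →
        IsCompact (closure ((L : Set G) ∩ (S * (H : Set G) * S)))) :=
  proper_on_quotient_iff_inter_SHS_relCompact_general L H hL hH
end

section
/- Let G = V be a finite-dimensional real vector space regarded as an additive group, and let L, H be linear subspaces of V. Then L ⋔ H (i.e., L ∩ (S + H + S) is relatively compact for every compact S ⊆ V) if and only if L ∩ H = {0}. -/
open Set Pointwise

/-- If `L ⊓ H = ⊥`, there is `c > 0` with `c * ‖x‖ ≤ infDist x H` for all `x ∈ L`. -/
lemma exists_sep_const {V : Type*} [NormedAddCommGroup V]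
    [NormedSpace ℝ V] [FiniteDimensional ℝ V] (L H : Submodule ℝ V)
    (hLH : L ⊓ H = ⊥) :
    ∃ c > 0, ∀ x ∈ L, c * ‖x‖ ≤ Metric.infDist x (H : Set V) := by
  have hHne : (H : Set V).Nonempty := ⟨0, H.zero_mem⟩
  have hHclosed : IsClosed (H : Set V) := Submodule.closed_of_finiteDimensional H
  set K : Set V := Metric.sphere (0 : V) 1 ∩ (L : Set V) with hK
  by_cases hKne : K.Nonempty
  · have hKcomp : IsCompact K := by
      apply (isCompact_sphere (0:V) 1).inter_right
      exact Submodule.closed_of_finiteDimensional L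
    obtain ⟨y₀, hy₀K, hy₀min⟩ :=
      hKcomp.exists_isMinOn hKne (Metric.continuous_infDist_pt (H : Set V)).continuousOn
    set c := Metric.infDist y₀ (H : Set V) with hc
    have hcpos : 0 < c := by
      rw [hc, ← hHclosed.notMem_iff_infDist_pos hHne]
      intro hmem
      have hmem' : y₀ ∈ L ⊓ H := ⟨hy₀K.2, hmem⟩
      rw [hLH, Submodule.mem_bot] at hmem'
      have h1 := hy₀K.1
      rw [hmem'] at h1
      simp at h1
    refine ⟨c, hcpos, fun x hx => ?_⟩
    rcases eq_or_ne x 0 with rfl | hx0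
    · simp [Metric.infDist_nonneg]
    · have hxnorm : (0:ℝ) < ‖x‖ := norm_pos_iff.mpr hx0
      set y := ‖x‖⁻¹ • x with hy
      have hyL : y ∈ L := L.smul_mem _ hx
      have hynorm : ‖y‖ = 1 := by
        rw [hy, norm_smul, norm_inv, norm_norm, inv_mul_cancel₀ hxnorm.ne']
      have hyK : y ∈ K := ⟨by simp [hynorm], hyL⟩
      have hylb : c ≤ Metric.infDist y (H : Set V) := hy₀min hyK
      -- infDist x H ≥ ‖x‖ * infDist y H
      have key : ‖x‖ * Metric.infDist y (H : Set V) ≤ Metric.infDist x (H : Set V) := by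
        refine le_of_not_gt fun hlt => ?_
        obtain ⟨h, hh, hdlt⟩ := (Metric.infDist_lt_iff hHne).mp hlt
        refine absurd hdlt (not_lt.mpr ?_)
        have hh' : ‖x‖⁻¹ • h ∈ (H : Set V) := H.smul_mem _ hh
        have h1 : Metric.infDist y (H : Set V) ≤ dist y (‖x‖⁻¹ • h) :=
          Metric.infDist_le_dist_of_mem hh'
        have h2 : dist y (‖x‖⁻¹ • h) = ‖x‖⁻¹ * dist x h := by
          rw [hy, dist_eq_norm, ← smul_sub, norm_smul, norm_inv, norm_norm, dist_eq_norm]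
        calc ‖x‖ * Metric.infDist y (H : Set V) ≤ ‖x‖ * (‖x‖⁻¹ * dist x h) := by
              apply mul_le_mul_of_nonneg_left _ hxnorm.le
              rw [← h2]; exact h1
          _ = dist x h := by field_simp
      exact le_trans (by nlinarith) key
  · -- K empty: L has no unit vectors, so L = ⊥ essentially
    refine ⟨1, one_pos, fun x hx => ?_⟩
    rcases eq_or_ne x 0 with rfl | hx0
    · simp [Metric.infDist_nonneg]
    · exfalso
      apply hKne
      have hxnorm : (0:ℝ) < ‖x‖ := norm_pos_iff.mpr hx0
      refine ⟨‖x‖⁻¹ • x, ?_, L.smul_mem _ hx⟩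
      simp [norm_smul, inv_mul_cancel₀ hxnorm.ne']

/-- For linear subspaces `L, H` of a finite-dimensional real vector space `V` (viewed as an
additive group), `L ⋔ H` — i.e. `L ∩ (S + H + S)` is relatively compact for every compact
`S ⊆ V` — holds if and only if `L ∩ H = {0}`. -/
theorem pitchfork_iff_trivial_intersection {V : Type*} [NormedAddCommGroup V]
    [NormedSpace ℝ V] [FiniteDimensional ℝ V] (L H : Submodule ℝ V) :
    (∀ S : Set V, IsCompact S →
        IsCompact (closure ((L : Set V) ∩ (S + (H : Set V) + S)))) ↔ L ⊓ H = ⊥ := by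
  constructor
  · intro hpitch
    have h0 := hpitch {0} isCompact_singleton
    have hset : ({0} : Set V) + (H : Set V) + {0} = (H : Set V) := by
      simp [Set.singleton_add, Set.add_singleton]
    rw [hset] at h0
    rw [eq_bot_iff]
    intro x hx
    simp only [Submodule.mem_bot]
    by_contra hx0
    have hbdd := h0.isBounded
    obtain ⟨r, hr⟩ := isBounded_iff_forall_norm_le.mp hbdd
    have hxnorm : (0:ℝ) < ‖x‖ := norm_pos_iff.mpr hx0
    obtain ⟨n, hn⟩ := exists_nat_gt (r / ‖x‖)
    have hmem : (n : ℝ) • x ∈ closure ((L : Set V) ∩ (H : Set V)) := by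
      apply subset_closure
      exact ⟨L.smul_mem _ hx.1, H.smul_mem _ hx.2⟩
    have := hr _ hmem
    rw [norm_smul, Real.norm_natCast] at this
    have : r / ‖x‖ ≥ (n:ℝ) := by
      rw [ge_iff_le, le_div_iff₀ hxnorm]
      exact this
    linarith
  · intro hLH S hS
    obtain ⟨c, hcpos, hc⟩ := exists_sep_const L H hLH
    obtain ⟨r, hr⟩ := isBounded_iff_forall_norm_le.mp hS.isBounded
    have hbdd : Bornology.IsBounded ((L : Set V) ∩ (S + (H : Set V) + S)) := by
      rw [isBounded_iff_forall_norm_le]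
      refine ⟨(2 * r) / c, fun x hx => ?_⟩
      obtain ⟨hxL, hxS⟩ := hx
      obtain ⟨sh, hsh, s₂, hs₂, rfl⟩ := hxS
      obtain ⟨s₁, hs₁, h, hh, rfl⟩ := hsh
      have hdist : Metric.infDist (s₁ + h + s₂) (H : Set V) ≤ 2 * r := by
        have : dist (s₁ + h + s₂) h ≤ 2 * r := by
          rw [dist_eq_norm]
          have : s₁ + h + s₂ - h = s₁ + s₂ := by abel
          rw [this]
          calc ‖s₁ + s₂‖ ≤ ‖s₁‖ + ‖s₂‖ := norm_add_le _ _
            _ ≤ r + r := add_le_add (hr _ hs₁) (hr _ hs₂)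
            _ = 2 * r := by ring
        exact le_trans (Metric.infDist_le_dist_of_mem hh) this
      have := le_trans (hc _ hxL) hdist
      rw [le_div_iff₀ hcpos, mul_comm]
      exact this
    exact Metric.isCompact_of_isClosed_isBounded isClosed_closure hbdd.closure
end

section
/- Let V be a finite-dimensional real normed vector space and S, T ⊆ V subsets. Define the asymptotic cone S∞ as the set of all limits lim_{n→∞} εₙ xₙ with xₙ ∈ S and εₙ > 0, εₙ → 0. If S∞ ∩ T∞ = {0}, then S ⋔ T in V, i.e., S ∩ (C + T + C) is bounded for every compact (equivalently, bounded) subset C ⊆ V. -/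
open Set Pointwise Filter

/-- The asymptotic cone (limit cone) of a subset `S` of a normed real vector space:
all limits `lim εₙ xₙ` with `xₙ ∈ S`, `εₙ > 0`, `εₙ → 0`. -/
def asymptoticCone' {V : Type*} [NormedAddCommGroup V] [NormedSpace ℝ V] (S : Set V) :
    Set V :=
  {v : V | ∃ (x : ℕ → V) (ε : ℕ → ℝ), (∀ n, x n ∈ S) ∧ (∀ n, 0 < ε n) ∧
    Tendsto ε atTop (nhds 0) ∧ Tendsto (fun n => ε n • x n) atTop (nhds v)}

/-!
If `S ∩ (C + T + C)` were unbounded, normalising an escaping sequence in it and extracting a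
convergent subsequence on the (compact) unit sphere would give a unit vector of its asymptotic
cone. That vector lies in `S∞`, and also in `T∞`, because `S ∩ (C + T + C) ⊆ T + (C + C)` and
adding a bounded set does not change limits of `εₙ xₙ` with `εₙ → 0`.
-/

theorem exists_seq_mem_lt_norm_of_not_isBounded {E : Type*} [SeminormedAddCommGroup E]
    {S : Set E} (hS : ¬Bornology.IsBounded S) :
    ∃ x : ℕ → E, (∀ n, x n ∈ S) ∧ ∀ n : ℕ, (n : ℝ) < ‖x n‖ := by
  have : ∀ n : ℕ, ∃ x ∈ S, (n : ℝ) < ‖x‖ := fun n => by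
    by_contra! hn
    exact hS (isBounded_iff_forall_norm_le.mpr ⟨n, hn⟩)
  choose x hxS hx using this
  exact ⟨x, hxS, hx⟩

section AsymptoticCone

variable {V : Type*} [NormedAddCommGroup V] [NormedSpace ℝ V]

theorem asymptoticCone'_mono {S T : Set V} (hST : S ⊆ T) :
    asymptoticCone' S ⊆ asymptoticCone' T := fun _ ⟨x, ε, hx, hε⟩ =>
  ⟨x, ε, fun n => hST (hx n), hε⟩

theorem asymptoticCone'_add_subset_of_isBounded {T B : Set V} (hB : Bornology.IsBounded B) :
    asymptoticCone' (T + B) ⊆ asymptoticCone' T := by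
  rintro v ⟨x, ε, hx, hε_pos, hε, hεx⟩
  choose t ht b hb hsum using hx
  obtain ⟨M, hM⟩ := isBounded_iff_forall_norm_le.mp hB
  have hεb : Tendsto (fun n => ε n • b n) atTop (nhds 0) :=
    hε.zero_smul_isBoundedUnder_le
      ⟨M, eventually_map.mpr (Eventually.of_forall fun n => hM _ (hb n))⟩
  refine ⟨t, ε, ht, hε_pos, hε, ?_⟩
  have : (fun n => ε n • t n) = fun n => ε n • x n - ε n • b n := by
    funext n
    rw [← smul_sub, ← hsum n, add_sub_cancel_right]
  simpa [this] using hεx.sub hεb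

theorem exists_ne_zero_mem_asymptoticCone'_of_not_isBounded [FiniteDimensional ℝ V] {S : Set V}
    (hS : ¬Bornology.IsBounded S) : ∃ v ∈ asymptoticCone' S, v ≠ 0 := by
  obtain ⟨x, hxS, hx⟩ := exists_seq_mem_lt_norm_of_not_isBounded hS
  have hx_pos : ∀ n, 0 < ‖x n‖ := fun n => (Nat.cast_nonneg n).trans_lt (hx n)
  have hsphere : ∀ n, ‖x n‖⁻¹ • x n ∈ Metric.sphere (0 : V) 1 := fun n => by
    rw [mem_sphere_zero_iff_norm, norm_smul, norm_inv, norm_norm, inv_mul_cancel₀ (hx_pos n).ne']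
  obtain ⟨v, hv, φ, hφ, hlim⟩ := (isCompact_sphere (0 : V) 1).tendsto_subseq hsphere
  have hnorm : Tendsto (fun n => ‖x n‖) atTop atTop :=
    tendsto_atTop_mono (fun n => (hx n).le) tendsto_natCast_atTop_atTop
  refine ⟨v, ⟨x ∘ φ, fun n => ‖x (φ n)‖⁻¹, fun n => hxS _, fun n => inv_pos.mpr (hx_pos _),
    (hnorm.comp hφ.tendsto_atTop).inv_tendsto_atTop, hlim⟩, ?_⟩
  rintro rfl
  simp at hv

end AsymptoticCone

/-- If the asymptotic cones of `S` and `T` intersect only at `0`, then `S ⋔ T`: the set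
`S ∩ (C + T + C)` is bounded for every compact subset `C` of `V`. -/
theorem asymptoticCone_inter_trivial_implies_pitchfork {V : Type*} [NormedAddCommGroup V]
    [NormedSpace ℝ V] [FiniteDimensional ℝ V] (S T : Set V)
    (h : asymptoticCone' S ∩ asymptoticCone' T ⊆ {0}) :
    ∀ C : Set V, IsCompact C → Bornology.IsBounded (S ∩ (C + T + C)) := by
  intro C hC
  by_contra hunb
  obtain ⟨v, hv, hv0⟩ := exists_ne_zero_mem_asymptoticCone'_of_not_isBounded hunb
  have hCTC : C + T + C = T + (C + C) := by rw [add_comm C T, add_assoc]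
  have hvS : v ∈ asymptoticCone' S := asymptoticCone'_mono inter_subset_left hv
  have hvT : v ∈ asymptoticCone' T :=
    asymptoticCone'_add_subset_of_isBounded (hC.add hC).isBounded
      (asymptoticCone'_mono (hCTC ▸ inter_subset_right) hv)
  exact hv0 (h ⟨hvS, hvT⟩)
end
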